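/- A severe antiwithdrawal at the end of a sequence of lexicographic revisions can be eliminated by disjoining the underformula: if B = under(S; L_n,...,L_1), then ∅ lex(L_1) ... lex(L_n) sev(S) is equivalent to ∅ lex(L_1 ∨ B) ... lex(L_n ∨ B) lex(B). -/

import Mathlib

open Set
open scoped Classical

variable {M : Type*}

namespace BeliefRevision

/-- `minSet C P`: the minimal models of `P` according to the total preorder `C`,
i.e. `C(i) ∩ Mod(P)` for the least `i` making this nonempty. -/
noncomputable def minSet : List (Set M) → Set M → Set M
  | [], _ => ∅
  | X :: rest, P => if (X ∩ P).Nonempty then X ∩ P else minSet rest P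

/-- Equivalence of total preorders: same minimal models for every formula. -/
def equivC (C C' : List (Set M)) : Prop :=
  ∀ P : Set M, minSet C P = minSet C' P

/-- A total preorder: an ordered partition (empty classes allowed) of all models. -/
def IsPartition (C : List (Set M)) : Prop :=
  C.Pairwise Disjoint ∧ C.foldr (· ∪ ·) ∅ = Set.univ

/-- Lexicographic revision. -/
def lex (C : List (Set M)) (L : Set M) : List (Set M) :=
  C.map (· ∩ L) ++ C.map (· \ L)

/-- Refinement. -/
def refi (C : List (Set M)) (R : Set M) : List (Set M) :=
  C.flatMap fun X => [X ∩ R, X \ R]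

/-- Natural revision: `[C(i)∩P, C(0),...,C(i-1), C(i)\P, C(i+1),...,C(m)]`. -/
noncomputable def natr : List (Set M) → Set M → List (Set M)
  | [], _ => []
  | X :: rest, P =>
    if (X ∩ P).Nonempty then (X ∩ P) :: (X \ P) :: rest
    else
      match natr rest P with
      | a :: r => a :: X :: r
      | [] => [X]

/-- Severe antiwithdrawal: merge classes `0..i` where `i` is least with `C(i)∩P ≠ ∅`. -/
noncomputable def sevw : List (Set M) → Set M → List (Set M)
  | [], _ => []
  | X :: rest, P =>
    if (X ∩ P).Nonempty then X :: rest
    else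
      match sevw rest P with
      | a :: r => (X ∪ a) :: r
      | [] => [X]

/-- Restrained revision. -/
noncomputable def res : List (Set M) → Set M → List (Set M)
  | [], _ => []
  | X :: rest, P =>
    if (X ∩ P).Nonempty then
      (X ∩ P) :: (X \ P) :: rest.flatMap (fun Y => [Y ∩ P, Y \ P])
    else
      match res rest P with
      | a :: r => a :: (X ∩ P) :: (X \ P) :: r
      | [] => [X ∩ P, X \ P]

/-- Very radical revision. -/
def rad (C : List (Set M)) (P : Set M) : List (Set M) :=
  C.map (· ∩ P) ++ [C.foldr (· ∪ ·) ∅ \ P]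

/-- Severe revision: `[C(i)∩P, (C(0)∪...∪C(i))\P, C(i+1),...,C(m)]`. -/
noncomputable def sevr : List (Set M) → Set M → List (Set M)
  | [], _ => []
  | X :: rest, P =>
    if (X ∩ P).Nonempty then (X ∩ P) :: (X \ P) :: rest
    else
      match sevr rest P with
      | a :: b :: r => a :: (X ∪ b) :: r
      | l => X :: l

/-- Moderate severe revision. -/
noncomputable def msev (C : List (Set M)) (P : Set M) : List (Set M) :=
  C.map (· ∩ P) ++ (sevw C P).map (· \ P)

/-- Merge `A` with the first nonempty class of the list (helper for `psev`). -/
noncomputable def mergeJ (A : Set M) : List (Set M) → List (Set M)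
  | [] => [A]
  | Y :: r => if Y.Nonempty then (A ∪ Y) :: r else mergeJ A r

/-- Plain severe revision:
`[C(i)∩P, C(0)∪...∪(C(i)\P)∪C(j), C(j+1),...,C(m)]` with `i` least with
`C(i)∩P ≠ ∅` and `j` the least index `> i` with `C(j) ≠ ∅`. -/
noncomputable def psev : List (Set M) → Set M → List (Set M)
  | [], _ => []
  | X :: rest, P =>
    if (X ∩ P).Nonempty then (X ∩ P) :: mergeJ (X \ P) rest
    else
      match psev rest P with
      | a :: b :: r => a :: (X ∪ b) :: r
      | l => X :: l

/-- Full meet revision. -/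
noncomputable def full (C : List (Set M)) (P : Set M) : List (Set M) :=
  [minSet C P, Set.univ \ minSet C P]

/-- `maxset F [F₁,...,Fₖ]`: conjoin each `Fᵢ` in order whenever consistent. -/
noncomputable def maxset : Set M → List (Set M) → Set M
  | F, [] => F
  | F, L :: rest => maxset (if (F ∩ L).Nonempty then F ∩ L else F) rest

/-- The underformula `under(S; Lₙ,...,L₁)`. -/
noncomputable def under : Set M → List (Set M) → Set M
  | _, [] => Set.univ
  | S, L :: rest =>
    if (S ∩ L).Nonempty then L ∩ under (S ∩ L) rest else L ∪ under S rest

/-- `upTo C S = C(0) ∪ ... ∪ C(i)` where `i` is least with `C(i)∩S ≠ ∅`. -/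
noncomputable def upTo : List (Set M) → Set M → Set M
  | [], _ => ∅
  | X :: rest, S => if (X ∩ S).Nonempty then X else X ∪ upTo rest S

noncomputable def longestAux : Set M → List (Set M) → Set M
  | A, [] => A
  | A, L :: rest => if (A ∩ L).Nonempty then longestAux (A ∩ L) rest else A

/-- Longest consistent conjunction of a sequence of formulas. -/
noncomputable def longest : List (Set M) → Set M
  | [] => Set.univ
  | L :: rest => longestAux L rest

/-- `rev` is a bottom-refining revision on `(C,P)`: it is a revision
(`min(C rev(P),⊤) = min(C,P)`) and, whenever `C(0)∩Mod(P) ≠ ∅`, class zero of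
the result is `C(0)∩Mod(P)` and class one is `C(0)\Mod(P)`. -/
noncomputable def BottomRefining (rev : List (Set M) → Set M → List (Set M))
    (C : List (Set M)) (P : Set M) : Prop :=
  minSet (rev C P) Set.univ = minSet C P ∧
  ((C.getD 0 ∅ ∩ P).Nonempty →
    (rev C P).getD 0 ∅ = C.getD 0 ∅ ∩ P ∧
    (rev C P).getD 1 ∅ = C.getD 0 ∅ \ P)

/-!
Lexicographic revisions of the flat preorder choose minimal models greedily:
`min(∅ lex(L₁)…lex(Lₙ), P)` is `P` conjoined with `Lₙ, …, L₁` in turn whenever the conjunction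
stays consistent (`maxset`). The severe antiwithdrawal merges the classes up to the first one
containing an `S`-model (`upTo`), and this merged class is exactly `B = under(S; Lₙ,…,L₁)`; the
later classes are untouched. On the right, `lex(B)` puts the `B`-models first. Inside `B` every
`Lᵢ ∨ B` is true, so nothing further is selected; outside `B`, `Lᵢ ∨ B` acts as `Lᵢ`, so the
selection is the one made by the original sequence.
-/

def Covers (C : List (Set M)) : Prop := ∀ x, ∃ X ∈ C, x ∈ X

noncomputable def classesAfter : List (Set M) → Set M → List (Set M)
  | [], _ => []
  | X :: rest, S => if (X ∩ S).Nonempty then rest else classesAfter rest S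

lemma covers_singleton_univ : Covers [(Set.univ : Set M)] :=
  fun x => ⟨univ, List.mem_singleton_self _, mem_univ x⟩

lemma covers_lex {C : List (Set M)} (hC : Covers C) (L : Set M) : Covers (lex C L) := by
  intro x
  obtain ⟨X, hX, hx⟩ := hC x
  by_cases hxL : x ∈ L
  · exact ⟨X ∩ L, List.mem_append_left _ (List.mem_map_of_mem hX), hx, hxL⟩
  · exact ⟨X \ L, List.mem_append_right _ (List.mem_map_of_mem hX), hx, hxL⟩

lemma covers_foldl_lex {C : List (Set M)} (hC : Covers C) (Ls : List (Set M)) :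
    Covers (Ls.foldl lex C) := by
  induction Ls generalizing C with
  | nil => exact hC
  | cons L Ls ih => exact ih (covers_lex hC L)

lemma minSet_eq_empty_iff {C : List (Set M)} {P : Set M} :
    minSet C P = ∅ ↔ ∀ X ∈ C, X ∩ P = ∅ := by
  induction C with
  | nil => simp [minSet]
  | cons X C ih =>
    by_cases hX : (X ∩ P).Nonempty
    · simp [minSet, hX, hX.ne_empty]
    · simp [minSet, ih, not_nonempty_iff_eq_empty.mp hX]

lemma Covers.minSet_nonempty_iff {C : List (Set M)} (hC : Covers C) {P : Set M} :
    (minSet C P).Nonempty ↔ P.Nonempty := by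
  simp only [nonempty_iff_ne_empty, ne_eq, minSet_eq_empty_iff, not_forall]
  constructor
  · rintro ⟨X, -, hX⟩ rfl
    exact hX (inter_empty X)
  · intro hP
    obtain ⟨x, hx⟩ := nonempty_iff_ne_empty.mpr hP
    obtain ⟨X, hX, hxX⟩ := hC x
    exact ⟨X, hX, Set.Nonempty.ne_empty ⟨x, hxX, hx⟩⟩

lemma minSet_singleton_univ (P : Set M) : minSet [univ] P = P := by
  by_cases hP : P.Nonempty
  · simp [minSet, hP]
  · simp [minSet, not_nonempty_iff_eq_empty.mp hP]

lemma minSet_append (A B : List (Set M)) (P : Set M) :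
    minSet (A ++ B) P = if (minSet A P).Nonempty then minSet A P else minSet B P := by
  induction A with
  | nil => simp [minSet]
  | cons X A ih => by_cases hX : (X ∩ P).Nonempty <;> simp [minSet, hX, ih]

lemma minSet_map_inter (C : List (Set M)) (L P : Set M) :
    minSet (C.map (· ∩ L)) P = minSet C (P ∩ L) := by
  induction C with
  | nil => rfl
  | cons X C ih => simp only [List.map_cons, minSet, inter_assoc, inter_comm L, ih]

lemma minSet_map_diff (C : List (Set M)) (L P : Set M) :
    minSet (C.map (· \ L)) P = minSet C (P \ L) := by
  induction C with
  | nil => rfl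
  | cons X C ih =>
    simp only [List.map_cons, minSet, ← inter_sdiff_right_comm, inter_sdiff_assoc, ih]

lemma Covers.minSet_lex {C : List (Set M)} (hC : Covers C) (L P : Set M) :
    minSet (lex C L) P = minSet C (if (P ∩ L).Nonempty then P ∩ L else P) := by
  rw [BeliefRevision.lex, minSet_append, minSet_map_inter, minSet_map_diff,
    hC.minSet_nonempty_iff]
  split_ifs with hPL
  · rfl
  · rw [sdiff_eq_left.mpr (not_disjoint_iff_nonempty_inter.not_right.mpr hPL)]

lemma maxset_append (F : Set M) (l₁ l₂ : List (Set M)) :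
    maxset F (l₁ ++ l₂) = maxset (maxset F l₁) l₂ := by
  induction l₁ generalizing F with
  | nil => rfl
  | cons L l₁ ih => exact ih _

lemma Covers.minSet_foldl_lex {C : List (Set M)} (hC : Covers C) (Ls : List (Set M))
    (P : Set M) : minSet (Ls.foldl lex C) P = minSet C (maxset P Ls.reverse) := by
  induction Ls generalizing C P with
  | nil => rfl
  | cons L Ls ih =>
    rw [List.foldl_cons, ih (covers_lex hC L), hC.minSet_lex, List.reverse_cons, maxset_append]
    rfl

lemma minSet_foldl_lex_univ (Ls : List (Set M)) (P : Set M) :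
    minSet (Ls.foldl lex [univ]) P = maxset P Ls.reverse := by
  rw [Covers.minSet_foldl_lex covers_singleton_univ, minSet_singleton_univ]

lemma maxset_map_union_of_subset {Q B : Set M} (h : Q ⊆ B) (l : List (Set M)) :
    maxset Q (l.map (· ∪ B)) = Q := by
  induction l with
  | nil => rfl
  | cons L l ih =>
    simp only [List.map_cons, maxset,
      inter_eq_self_of_subset_left (h.trans subset_union_right), ite_self, ih]

lemma maxset_map_union_of_disjoint {Q B : Set M} (hQ : Disjoint Q B) (l : List (Set M)) :
    maxset Q (l.map (· ∪ B)) = maxset Q l := by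
  induction l generalizing Q with
  | nil => rfl
  | cons L l ih =>
    have hQL : Q ∩ (L ∪ B) = Q ∩ L := by
      rw [inter_union_distrib_left, disjoint_iff_inter_eq_empty.mp hQ, union_empty]
    simp only [List.map_cons, maxset, hQL]
    split_ifs
    exacts [ih (hQ.mono_left inter_subset_left), ih hQ]

lemma upTo_map_inter (C : List (Set M)) (L S : Set M) :
    upTo (C.map (· ∩ L)) S = L ∩ upTo C (S ∩ L) := by
  induction C with
  | nil => simp [upTo]
  | cons X C ih =>
    have hX : X ∩ L ∩ S = X ∩ (S ∩ L) := by rw [inter_assoc, inter_comm L]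
    simp only [List.map_cons, upTo, hX, ih]
    split_ifs
    · exact inter_comm X L
    · rw [inter_union_distrib_left, inter_comm X L]

lemma upTo_map_diff (C : List (Set M)) {L S : Set M} (hSL : Disjoint S L) :
    upTo (C.map (· \ L)) S = upTo C S \ L := by
  induction C with
  | nil => simp [upTo]
  | cons X C ih =>
    have hX : (X \ L) ∩ S = X ∩ S := by
      rw [← inter_sdiff_right_comm, sdiff_eq_left.mpr (hSL.mono_left inter_subset_right)]
    simp only [List.map_cons, upTo, hX, ih]
    split_ifs
    · rfl
    · exact union_sdiff_distrib.symm

lemma upTo_append_of_exists {A : List (Set M)} (B : List (Set M)) {S : Set M}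
    (h : ∃ X ∈ A, (X ∩ S).Nonempty) : upTo (A ++ B) S = upTo A S := by
  induction A with
  | nil => simp at h
  | cons X A ih =>
    by_cases hX : (X ∩ S).Nonempty
    · simp [upTo, hX]
    · have hA : ∃ Y ∈ A, (Y ∩ S).Nonempty := by simpa [hX] using h
      simp [upTo, hX, ih hA]

lemma upTo_append_of_forall {A : List (Set M)} (B : List (Set M)) {S : Set M}
    (h : ∀ X ∈ A, ¬(X ∩ S).Nonempty) : upTo (A ++ B) S = (⋃ X ∈ A, X) ∪ upTo B S := by
  induction A with
  | nil => simp
  | cons X A ih =>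
    simp only [List.mem_cons, forall_eq_or_imp] at h
    simp [upTo, h.1, ih h.2, union_assoc]

lemma Covers.upTo_lex {C : List (Set M)} (hC : Covers C) (L S : Set M) :
    upTo (lex C L) S = if (S ∩ L).Nonempty then L ∩ upTo C (S ∩ L) else L ∪ upTo C S := by
  split_ifs with hSL
  · obtain ⟨x, hxS, hxL⟩ := hSL
    obtain ⟨X, hX, hxX⟩ := hC x
    have hhit : ∃ Y ∈ C.map (· ∩ L), (Y ∩ S).Nonempty :=
      ⟨X ∩ L, List.mem_map_of_mem hX, x, ⟨hxX, hxL⟩, hxS⟩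
    rw [BeliefRevision.lex, upTo_append_of_exists _ hhit, upTo_map_inter]
  · have hmiss : ∀ Y ∈ C.map (· ∩ L), ¬(Y ∩ S).Nonempty := by
      simp only [List.mem_map, forall_exists_index, and_imp, forall_apply_eq_imp_iff₂]
      rintro X - ⟨x, ⟨-, hxL⟩, hxS⟩
      exact hSL ⟨x, hxS, hxL⟩
    have hL : (⋃ Y ∈ C.map (· ∩ L), Y) = L := by
      ext x
      simp only [mem_iUnion, List.mem_map, exists_prop]
      refine ⟨fun ⟨_, ⟨_, _, rfl⟩, hx⟩ => hx.2, fun hx => ?_⟩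
      obtain ⟨X, hX, hxX⟩ := hC x
      exact ⟨X ∩ L, ⟨X, hX, rfl⟩, hxX, hx⟩
    rw [BeliefRevision.lex, upTo_append_of_forall _ hmiss, hL,
      upTo_map_diff _ (not_disjoint_iff_nonempty_inter.not_right.mpr hSL), union_sdiff_self]

lemma upTo_foldl_lex_univ (Ls : List (Set M)) (S : Set M) :
    upTo (Ls.foldl lex [univ]) S = under S Ls.reverse := by
  induction Ls using List.reverseRecOn generalizing S with
  | nil => by_cases hS : S.Nonempty <;> simp [upTo, under, hS]
  | append_singleton Ls L ih =>
    rw [List.foldl_append, List.foldl_cons, List.foldl_nil,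
      (covers_foldl_lex covers_singleton_univ Ls).upTo_lex, List.reverse_append,
      List.reverse_singleton, List.singleton_append, under, ih, ih]

lemma sevw_eq_cons {C : List (Set M)} (hC : C ≠ []) (S : Set M) :
    sevw C S = upTo C S :: classesAfter C S := by
  induction C with
  | nil => exact absurd rfl hC
  | cons X C ih =>
    by_cases hX : (X ∩ S).Nonempty
    · simp [sevw, upTo, classesAfter, hX]
    · rcases eq_or_ne C [] with rfl | hC'
      · simp [sevw, upTo, classesAfter, hX]
      · simp [sevw, upTo, classesAfter, hX, ih hC']

lemma minSet_classesAfter {C : List (Set M)} {S P : Set M} (h : Disjoint P (upTo C S)) :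
    minSet (classesAfter C S) P = minSet C P := by
  induction C with
  | nil => rfl
  | cons X C ih =>
    by_cases hXS : (X ∩ S).Nonempty
    · simp only [upTo, if_pos hXS] at h
      simp only [classesAfter, minSet, if_pos hXS,
        if_neg (not_disjoint_iff_nonempty_inter.not_right.mp h.symm)]
    · simp only [upTo, if_neg hXS, disjoint_union_right] at h
      simp only [classesAfter, minSet, if_neg hXS,
        if_neg (not_disjoint_iff_nonempty_inter.not_right.mp h.1.symm), ih h.2]

lemma minSet_sevw (C : List (Set M)) (S P : Set M) :
    minSet (sevw C S) P =
      if (P ∩ upTo C S).Nonempty then P ∩ upTo C S else minSet C P := by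
  rcases eq_or_ne C [] with rfl | hC
  · simp [sevw, upTo, minSet]
  · rw [sevw_eq_cons hC, minSet, inter_comm]
    split_ifs with h
    · rfl
    · exact minSet_classesAfter (not_disjoint_iff_nonempty_inter.not_right.mpr h)

theorem sevw_elimination_general (Ls : List (Set M)) (S B : Set M)
    (hB : B = under S Ls.reverse) :
    equivC (sevw (Ls.foldl lex [Set.univ]) S)
      (lex ((Ls.map (· ∪ B)).foldl lex [Set.univ]) B) := by
  intro P
  rw [minSet_sevw, upTo_foldl_lex_univ, ← hB,
    (covers_foldl_lex covers_singleton_univ _).minSet_lex, minSet_foldl_lex_univ,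
    minSet_foldl_lex_univ, ← List.map_reverse]
  split_ifs with hPB
  · exact (maxset_map_union_of_subset inter_subset_right _).symm
  · exact (maxset_map_union_of_disjoint (not_disjoint_iff_nonempty_inter.not_right.mpr hPB) _).symm

/-- A severe antiwithdrawal at the end of a sequence of lexicographic revisions
can be eliminated by disjoining the underformula:
`∅ lex(L₁)...lex(Lₙ) sev(S) ≡ ∅ lex(L₁∨B)...lex(Lₙ∨B) lex(B)`
where `B = under(S; Lₙ,...,L₁)`. -/
theorem sevw_elimination (Ls : List (Set M)) (S B : Set M) (hS : S.Nonempty)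
    (hB : B = under S Ls.reverse) :
    equivC (sevw (Ls.foldl lex [Set.univ]) S)
      (lex ((Ls.map (· ∪ B)).foldl lex [Set.univ]) B) :=
  sevw_elimination_general Ls S B hB

end BeliefRevision
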